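/- Let σ, μ, λ > 0, A ∈ ℝ^{m×n} a matrix (linear forward operator), D ∈ ℝ^{ℓ×n}, b ∈ ℝ^m, z ∈ ℝ^ℓ. Then the projected function f_proj(x) = (1/(2σ²))‖Ax − b‖₂² + (λ²/2)‖Dx − y_z(x) + z‖₂² + μ‖y_z(x)‖₁ is differentiable at every x ∈ ℝ^n, with gradient ∇f_proj(x) = (1/σ²)·Aᵀ(Ax − b) + λ²·Dᵀ(Dx + z − y_z(x)). -/

import Mathlib

lemma sqmax_hasDerivAt (u : ℝ) : HasDerivAt (fun v : ℝ => max v 0 ^ 2) (2 * max u 0) u := by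
  rcases lt_trichotomy u 0 with h | h | h
  · have hz : 2 * max u 0 = 0 := by rw [max_eq_right h.le]; ring
    rw [hz]
    have : (fun v : ℝ => max v 0 ^ 2) =ᶠ[nhds u] fun _ => (0:ℝ) := by
      filter_upwards [Iio_mem_nhds h] with v hv
      rw [max_eq_right (le_of_lt hv)]; ring
    exact (hasDerivAt_const u (0:ℝ)).congr_of_eventuallyEq this
  · subst h
    have hz : 2 * max (0:ℝ) 0 = 0 := by simp
    rw [hz, hasDerivAt_iff_tendsto_slope]
    have hb : ∀ v : ℝ, ‖slope (fun v : ℝ => max v 0 ^ 2) 0 v‖ ≤ |v| := by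
      intro v
      rcases eq_or_ne v 0 with rfl | hv
      · simp [slope]
      · rw [slope_def_field]
        rcases le_or_gt v 0 with h2 | h2
        · rw [max_eq_right h2]; simp
        · rw [max_eq_left h2.le]
          rw [show ((v:ℝ)^2 - max 0 0 ^2)/(v - 0) = v by field_simp; simp [sq]]
          exact le_refl _
    have hg : Filter.Tendsto (fun v : ℝ => |v|) (nhdsWithin 0 {(0:ℝ)}ᶜ) (nhds 0) := by
      have h1 : Filter.Tendsto (fun v : ℝ => |v|) (nhdsWithin 0 {(0:ℝ)}ᶜ) (nhds (|(0:ℝ)|)) :=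
        (continuous_abs.tendsto (0:ℝ)).mono_left nhdsWithin_le_nhds
      simpa using h1
    exact squeeze_zero_norm hb hg
  · have : (fun v : ℝ => max v 0 ^ 2) =ᶠ[nhds u] fun v => v ^ 2 := by
      filter_upwards [Ioi_mem_nhds h] with v hv
      rw [max_eq_left (le_of_lt hv)]
    have h2 : HasDerivAt (fun v : ℝ => v ^ 2) (2 * max u 0) u := by
      rw [max_eq_left h.le]
      simpa using (hasDerivAt_pow 2 u)
    exact h2.congr_of_eventuallyEq this


lemma key_eq (c : ℝ) (hc : 0 < c) (t : ℝ) :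
    (t - Real.sign t * max (|t| - c) 0)^2 + (2*c) * |Real.sign t * max (|t| - c) 0|
      = t^2 - (max (t-c) 0 ^2 + max (-t-c) 0 ^2) := by
  rcases lt_trichotomy t 0 with h | h | h
  · rw [Real.sign_of_neg h, abs_of_neg h, max_eq_right (by linarith : t - c ≤ 0)]
    rcases le_or_gt (-t) c with h2 | h2
    · rw [max_eq_right (by linarith : -t - c ≤ 0)]
      simp
    · rw [max_eq_left (by linarith : (0:ℝ) ≤ -t - c),
        abs_of_nonpos (by nlinarith : (-1:ℝ) * (-t - c) ≤ 0)]
      ring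
  · subst h
    rw [Real.sign_zero, max_eq_right (by linarith : (0:ℝ) - c ≤ 0),
      max_eq_right (by linarith : -(0:ℝ) - c ≤ 0)]
    simp
  · rw [Real.sign_of_pos h, abs_of_pos h, max_eq_right (by linarith : -t - c ≤ 0)]
    rcases le_or_gt t c with h2 | h2
    · rw [max_eq_right (by linarith : t - c ≤ 0)]
      simp
    · rw [max_eq_left (by linarith : (0:ℝ) ≤ t - c),
        abs_of_nonneg (by nlinarith : (0:ℝ) ≤ (1:ℝ) * (t - c))]
      ring

lemma s_eq (c : ℝ) (hc : 0 < c) (t : ℝ) :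
    Real.sign t * max (|t| - c) 0 = max (t-c) 0 - max (-t-c) 0 := by
  rcases lt_trichotomy t 0 with h | h | h
  · rw [Real.sign_of_neg h, abs_of_neg h, max_eq_right (by linarith : t - c ≤ 0)]; ring
  · subst h
    rw [Real.sign_zero, max_eq_right (by linarith : (0:ℝ) - c ≤ 0),
      max_eq_right (by linarith : -(0:ℝ) - c ≤ 0)]
    simp
  · rw [Real.sign_of_pos h, abs_of_pos h, max_eq_right (by linarith : -t - c ≤ 0)]; ring

lemma huber_hasDerivAt (μ lam : ℝ) (hμ : 0 < μ) (hlam : 0 < lam) (t : ℝ) :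
    HasDerivAt (fun t : ℝ =>
        lam^2/2 * (t - Real.sign t * max (|t| - μ/lam^2) 0)^2
        + μ * |Real.sign t * max (|t| - μ/lam^2) 0|)
      (lam^2 * (t - Real.sign t * max (|t| - μ/lam^2) 0)) t := by
  set c := μ / lam^2 with hcdef
  have hl2 : (0:ℝ) < lam^2 := by positivity
  have hc : 0 < c := by positivity
  have hμc : μ = lam^2 * c := by rw [hcdef]; field_simp
  have hfun : (fun t : ℝ =>
      lam^2/2 * (t - Real.sign t * max (|t| - c) 0)^2
        + μ * |Real.sign t * max (|t| - c) 0|)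
      = fun t : ℝ => lam^2/2 * t^2 - lam^2/2 * (max (t-c) 0 ^2 + max (-t-c) 0 ^2) := by
    funext u
    have := key_eq c hc u
    rw [hμc]
    nlinarith [this]
  rw [hfun]
  have h1 : HasDerivAt (fun u : ℝ => max (u - c) 0 ^ 2) (2 * max (t-c) 0 * 1) t :=
    (sqmax_hasDerivAt (t-c)).comp (h₂ := fun v : ℝ => max v 0 ^ 2) t ((hasDerivAt_id' t).sub_const c)
  have h2 : HasDerivAt (fun u : ℝ => max (-u - c) 0 ^ 2) (2 * max (-t-c) 0 * (-1)) t := by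
    have inner : HasDerivAt (fun u : ℝ => -u - c) (-1) t := by
      simpa using ((hasDerivAt_id t).neg.sub_const c)
    exact (sqmax_hasDerivAt (-t-c)).comp t inner
  have h0 : HasDerivAt (fun u : ℝ => lam^2/2 * u^2) (lam^2/2 * (2*t^1)) t :=
    (hasDerivAt_pow 2 t).const_mul (lam^2/2)
  have H := h0.sub ((h1.add h2).const_mul (lam^2/2))
  refine H.congr_deriv ?_
  rw [s_eq c hc t]
  ring

noncomputable def softY {l n : ℕ} (μ lam : ℝ) (D : Matrix (Fin l) (Fin n) ℝ)
    (z : Fin l → ℝ) (x : Fin n → ℝ) : Fin l → ℝ :=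
  fun i => Real.sign (D.mulVec x i + z i) * max (|D.mulVec x i + z i| - μ / lam ^ 2) 0

noncomputable def fprojL {m n l : ℕ} (σ μ lam : ℝ) (A : Matrix (Fin m) (Fin n) ℝ)
    (D : Matrix (Fin l) (Fin n) ℝ) (b : Fin m → ℝ) (z : Fin l → ℝ)
    (x : Fin n → ℝ) : ℝ :=
  1 / (2 * σ ^ 2) * ∑ i, (A.mulVec x i - b i) ^ 2
    + lam ^ 2 / 2 * ∑ i, (D.mulVec x i - softY μ lam D z x i + z i) ^ 2
    + μ * ∑ i, |softY μ lam D z x i|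

-- row functional of a matrix as a CLM
noncomputable def rowCLM {p n : ℕ} (M : Matrix (Fin p) (Fin n) ℝ) (i : Fin p) :
    (Fin n → ℝ) →L[ℝ] ℝ :=
  ∑ j, M i j • (ContinuousLinearMap.proj j : (Fin n → ℝ) →L[ℝ] ℝ)

lemma rowCLM_apply {p n : ℕ} (M : Matrix (Fin p) (Fin n) ℝ) (i : Fin p) (v : Fin n → ℝ) :
    rowCLM M i v = M.mulVec v i := by
  simp [rowCLM, ContinuousLinearMap.sum_apply, Matrix.mulVec, dotProduct]

/-- for a linear forward operator `A`, `f_proj` is differentiable at every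
`x`, with gradient `∇f_proj(x) = (1/σ²)Aᵀ(Ax − b) + λ²Dᵀ(Dx + z − y_z(x))`, i.e. its
Fréchet derivative at `x` is the linear functional `v ↦ ⟨∇f_proj(x), v⟩`. -/
theorem stmt_9 {m n l : ℕ} (σ μ lam : ℝ) (hσ : 0 < σ) (hμ : 0 < μ) (hlam : 0 < lam)
    (A : Matrix (Fin m) (Fin n) ℝ) (D : Matrix (Fin l) (Fin n) ℝ)
    (b : Fin m → ℝ) (z : Fin l → ℝ) :
    ∀ x : Fin n → ℝ,
      HasFDerivAt (fprojL σ μ lam A D b z)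
        (∑ i : Fin n,
          ((1 / σ ^ 2) • A.transpose.mulVec (A.mulVec x - b)
            + lam ^ 2 • D.transpose.mulVec (D.mulVec x + z - softY μ lam D z x)) i •
          (ContinuousLinearMap.proj i : (Fin n → ℝ) →L[ℝ] ℝ)) x := by
  intro x
  -- rewrite fprojL as data term + sum of huber terms
  have hf : fprojL σ μ lam A D b z = fun x =>
      (1 / (2 * σ ^ 2) * ∑ i, (A.mulVec x i - b i) ^ 2)
      + ∑ i, (lam^2/2 * ((D.mulVec x i + z i)
            - Real.sign (D.mulVec x i + z i) * max (|D.mulVec x i + z i| - μ/lam^2) 0)^2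
          + μ * |Real.sign (D.mulVec x i + z i) * max (|D.mulVec x i + z i| - μ/lam^2) 0|) := by
    funext x
    unfold fprojL softY
    rw [Finset.mul_sum (a := lam^2/2), Finset.mul_sum (a := μ), add_assoc,
      ← Finset.sum_add_distrib]
    congr 1
    apply Finset.sum_congr rfl
    intro i _
    ring
  rw [hf]
  -- derivative of data term
  have hdata : HasFDerivAt
      (fun x : Fin n → ℝ => 1 / (2 * σ ^ 2) * ∑ i, (A.mulVec x i - b i) ^ 2)
      ((1 / (2 * σ ^ 2)) • ∑ i : Fin m, (2 * (A.mulVec x i - b i)) • rowCLM A i) x := by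
    apply HasFDerivAt.const_mul
    apply HasFDerivAt.fun_sum
    intro i _
    have hlin : HasFDerivAt (fun x : Fin n → ℝ => A.mulVec x i) (rowCLM A i) x := by
      have := (rowCLM A i).hasFDerivAt (x := x)
      refine this.congr_of_eventuallyEq ?_
      filter_upwards with y
      rw [rowCLM_apply]
    have hsq : HasDerivAt (fun u : ℝ => (u - b i)^2) (2 * (A.mulVec x i - b i)) (A.mulVec x i) := by
      have h := ((hasDerivAt_id (A.mulVec x i)).sub_const (b i)).fun_pow 2
      simpa using h
    exact hsq.comp_hasFDerivAt x hlin
  -- derivative of huber terms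
  have hhub : HasFDerivAt
      (fun x : Fin n → ℝ => ∑ i, (lam^2/2 * ((D.mulVec x i + z i)
            - Real.sign (D.mulVec x i + z i) * max (|D.mulVec x i + z i| - μ/lam^2) 0)^2
          + μ * |Real.sign (D.mulVec x i + z i) * max (|D.mulVec x i + z i| - μ/lam^2) 0|))
      (∑ i : Fin l, (lam^2 * ((D.mulVec x i + z i)
            - Real.sign (D.mulVec x i + z i) * max (|D.mulVec x i + z i| - μ/lam^2) 0)) • rowCLM D i) x := by
    apply HasFDerivAt.fun_sum
    intro i _
    have hlin : HasFDerivAt (fun x : Fin n → ℝ => D.mulVec x i + z i) (rowCLM D i) x := by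
      have h0 : HasFDerivAt (fun x : Fin n → ℝ => D.mulVec x i) (rowCLM D i) x := by
        have := (rowCLM D i).hasFDerivAt (x := x)
        refine this.congr_of_eventuallyEq ?_
        filter_upwards with y
        rw [rowCLM_apply]
      exact h0.add_const (z i)
    exact (huber_hasDerivAt μ lam hμ hlam (D.mulVec x i + z i)).comp_hasFDerivAt x hlin
  have H := hdata.add hhub
  refine H.congr_fderiv (Eq.symm ?_)
  -- equality of CLMs
  ext v
  simp only [ContinuousLinearMap.add_apply, ContinuousLinearMap.smul_apply,
    ContinuousLinearMap.sum_apply, ContinuousLinearMap.proj_apply, smul_eq_mul,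
    Pi.add_apply, Pi.smul_apply, Pi.sub_apply, rowCLM_apply]
  simp only [Matrix.mulVec, Matrix.transpose_apply, dotProduct, Pi.sub_apply,
    Pi.add_apply, softY]
  simp only [add_mul, Finset.sum_add_distrib, Finset.sum_mul, Finset.mul_sum]
  congr 1
  · rw [Finset.sum_comm]
    refine Finset.sum_congr rfl fun i _ => Finset.sum_congr rfl fun j _ => ?_
    have hσ2 : σ^2 ≠ 0 := by positivity
    field_simp
  · rw [Finset.sum_comm]
    refine Finset.sum_congr rfl fun i _ => Finset.sum_congr rfl fun j _ => ?_
    ring
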